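/- In the quantum exterior algebra Λ, the Q-weight-zero homogeneous component of the degree-2 part Λ² is three-dimensional, spanned by f_{α₁}e_{α₁}, f_{α₂}e_{α₂}, and f_{α₁+α₂}e_{α₁+α₂}. (This computes the space of left O_q(SU₃)-coinvariant 2-forms of Ω²_q(F₃).) -/

import Mathlib

noncomputable section

namespace QFlagExt

/-- The positive roots of `sl₃`: `a1 = α₁`, `a2 = α₂`, `a12 = α₁+α₂`. -/
inductive PosRoot : Type
  | a1 | a2 | a12
deriving DecidableEq

instance : Fintype PosRoot := ⟨{PosRoot.a1, PosRoot.a2, PosRoot.a12}, fun x => by cases x <;> simp⟩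

open PosRoot

/-- Position in the convex order `α₂ < α₁+α₂ < α₁`. -/
def pos : PosRoot → ℕ
  | a2 => 0
  | a12 => 1
  | a1 => 2

/-- The symmetric bilinear form `(·,·)` on the roots of `sl₃`. -/
def ip : PosRoot → PosRoot → ℤ
  | a1, a1 => 2
  | a2, a2 => 2
  | a12, a12 => 2
  | a1, a2 => -1
  | a2, a1 => -1
  | a1, a12 => 1
  | a12, a1 => 1
  | a2, a12 => 1
  | a12, a2 => 1

/-- Generators of the quantum exterior algebra: `e γ` and `f γ` for `γ ∈ Δ⁺`. -/
inductive LGen : Type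
  | e : PosRoot → LGen
  | f : PosRoot → LGen
deriving DecidableEq, Fintype

open LGen

/-- The generators viewed inside the free algebra. -/
def ce (x : LGen) : FreeAlgebra ℂ LGen := FreeAlgebra.ι ℂ x

/-- The defining relations of the quantum exterior algebra `Λ` of the full quantum
flag manifold of `O_q(SU₃)`. -/
inductive lrel (q : ℝ) : FreeAlgebra ℂ LGen → FreeAlgebra ℂ LGen → Prop
  | ee (β γ : PosRoot) (h : pos β ≤ pos γ) :
      lrel q (ce (e γ) * ce (e β)) ((-((q : ℂ) ^ ip β γ)) • (ce (e β) * ce (e γ)))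
  | ff (β γ : PosRoot) (h : pos β ≤ pos γ) :
      lrel q (ce (f γ) * ce (f β)) ((-((q : ℂ) ^ (-ip β γ))) • (ce (f β) * ce (f γ)))
  | ef (β γ : PosRoot) (h : β ≠ γ ∨ (β = a12 ∧ γ = a12)) :
      lrel q (ce (e γ) * ce (f β)) ((-((q : ℂ) ^ ip β γ)) • (ce (f β) * ce (e γ)))
  | ef1 :
      lrel q (ce (e a1) * ce (f a1))
        ((-((q : ℂ) ^ (2 : ℤ))) • (ce (f a1) * ce (e a1))
          - ((q : ℂ) - (q : ℂ)⁻¹) • (ce (f a12) * ce (e a12)))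
  | ef2 :
      lrel q (ce (e a2) * ce (f a2))
        ((-((q : ℂ) ^ (2 : ℤ))) • (ce (f a2) * ce (e a2))
          + ((q : ℂ) - (q : ℂ)⁻¹) • (ce (f a12) * ce (e a12)))

/-- The quantum exterior algebra `Λ`. -/
abbrev Lam (q : ℝ) := RingQuot (lrel q)

/-- The generators of `Λ`. -/
def gen (q : ℝ) (x : LGen) : Lam q := RingQuot.mkAlgHom ℂ (lrel q) (ce x)

/-- The positive roots listed in the convex order. -/
def rootList : List PosRoot := [a2, a12, a1]

/-- The ordered monomial `e_{γ₁}⋯e_{γ_a}` over the roots in `s`, in increasing convex order. -/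
def emon (q : ℝ) (s : Finset PosRoot) : Lam q :=
  ((rootList.filter fun γ => decide (γ ∈ s)).map fun γ => gen q (e γ)).prod

/-- The ordered monomial `f_{δ₁}⋯f_{δ_b}` over the roots in `s`, in increasing convex order. -/
def fmon (q : ℝ) (s : Finset PosRoot) : Lam q :=
  ((rootList.filter fun γ => decide (γ ∈ s)).map fun γ => gen q (f γ)).prod

/-- The PBW monomial `f_{δ₁}⋯f_{δ_b} e_{γ₁}⋯e_{γ_a}`. -/
def mon (q : ℝ) (p : Finset PosRoot × Finset PosRoot) : Lam q :=
  fmon q p.1 * emon q p.2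

end QFlagExt

namespace QFlagExt

open PosRoot LGen

/-- Coordinates of a positive root in the root lattice `Q = ℤα₁ ⊕ ℤα₂ ≅ ℤ × ℤ`. -/
def coords : PosRoot → ℤ × ℤ
  | a1 => (1, 0)
  | a2 => (0, 1)
  | a12 => (1, 1)

/-- The `Q`-weight of a generator: `e γ` has weight `γ` and `f γ` has weight `−γ`. -/
def wt : LGen → ℤ × ℤ
  | e γ => coords γ
  | f γ => -coords γ

/-- The `Q`-weight-zero homogeneous component of the degree-2 part `Λ²`: the span of
all weight-zero products of two generators. -/
def wtZeroDeg2 (q : ℝ) : Submodule ℂ (Lam q) :=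
  Submodule.span ℂ {x | ∃ g h : LGen, wt g + wt h = 0 ∧ x = gen q g * gen q h}

/-! The relations `e_γ f_γ ∈ span {f_δ e_δ}` show that the three products `f_γ e_γ` span the
weight-zero part of `Λ²`, since every weight-zero product of two generators is `e_γ f_γ` or
`f_γ e_γ`. For their independence, `Λ` acts on the 16-dimensional space with basis `1`, the six
generators and the nine monomials `f_β e_γ`: a generator acts by left multiplication, the
product being rewritten in this basis by the relations, and set to zero when it is a product
`e e`, `f f` or of degree three. Applied to `1`, the elements `f_γ e_γ` give three distinct basis
vectors. -/

section Relations

variable (q : ℝ)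

def fe (γ : PosRoot) : Lam q := gen q (f γ) * gen q (e γ)

lemma gen_e_mul_gen_f (β γ : PosRoot) (h : β ≠ γ ∨ (β = a12 ∧ γ = a12)) :
    gen q (e γ) * gen q (f β) = (-((q : ℂ) ^ ip β γ)) • (gen q (f β) * gen q (e γ)) := by
  simpa only [gen, map_mul, map_smul] using RingQuot.mkAlgHom_rel ℂ (lrel.ef β γ h)

lemma gen_e_a1_mul_gen_f_a1 :
    gen q (e a1) * gen q (f a1) =
      (-((q : ℂ) ^ (2 : ℤ))) • fe q a1 - ((q : ℂ) - (q : ℂ)⁻¹) • fe q a12 := by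
  simpa only [fe, gen, map_mul, map_smul, map_sub] using
    RingQuot.mkAlgHom_rel ℂ (lrel.ef1 (q := q))

lemma gen_e_a2_mul_gen_f_a2 :
    gen q (e a2) * gen q (f a2) =
      (-((q : ℂ) ^ (2 : ℤ))) • fe q a2 + ((q : ℂ) - (q : ℂ)⁻¹) • fe q a12 := by
  simpa only [fe, gen, map_mul, map_smul, map_add] using
    RingQuot.mkAlgHom_rel ℂ (lrel.ef2 (q := q))

lemma gen_e_mul_gen_f_mem_span_fe (γ : PosRoot) :
    gen q (e γ) * gen q (f γ) ∈ Submodule.span ℂ (Set.range (fe q)) := by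
  have hfe (δ : PosRoot) : fe q δ ∈ Submodule.span ℂ (Set.range (fe q)) :=
    Submodule.subset_span ⟨δ, rfl⟩
  cases γ with
  | a1 =>
    rw [gen_e_a1_mul_gen_f_a1]
    exact sub_mem (Submodule.smul_mem _ _ (hfe a1)) (Submodule.smul_mem _ _ (hfe a12))
  | a2 =>
    rw [gen_e_a2_mul_gen_f_a2]
    exact add_mem (Submodule.smul_mem _ _ (hfe a2)) (Submodule.smul_mem _ _ (hfe a12))
  | a12 =>
    rw [gen_e_mul_gen_f q a12 a12 (Or.inr ⟨rfl, rfl⟩)]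
    exact Submodule.smul_mem _ _ (hfe a12)

end Relations

lemma exists_eq_of_wt_add_eq_zero {g h : LGen} (hw : wt g + wt h = 0) :
    ∃ γ, (g = e γ ∧ h = f γ) ∨ (g = f γ ∧ h = e γ) := by
  revert g h
  decide

lemma wtZeroDeg2_eq_span_fe (q : ℝ) : wtZeroDeg2 q = Submodule.span ℂ (Set.range (fe q)) := by
  apply le_antisymm
  · refine Submodule.span_le.2 ?_
    rintro _ ⟨g, h, hw, rfl⟩
    obtain ⟨γ, ⟨rfl, rfl⟩ | ⟨rfl, rfl⟩⟩ := exists_eq_of_wt_add_eq_zero hw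
    · exact gen_e_mul_gen_f_mem_span_fe q γ
    · exact Submodule.subset_span ⟨γ, rfl⟩
  · refine Submodule.span_le.2 ?_
    rintro _ ⟨γ, rfl⟩
    exact Submodule.subset_span ⟨f γ, e γ, neg_add_cancel _, rfl⟩

inductive TruncMon : Type
  | one : TruncMon
  | ofGen : LGen → TruncMon
  | fe : PosRoot → PosRoot → TruncMon
deriving DecidableEq, Fintype

section TruncRep

variable (q : ℝ)

/-- `e_γ f_β` rewritten by the relations of `Λ` in the monomials `f_δ e_δ'`. -/
def efNormal : PosRoot → PosRoot → TruncMon → ℂ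
  | a1, a1 => (-((q : ℂ) ^ (2 : ℤ))) • Pi.single (TruncMon.fe a1 a1) 1
      - ((q : ℂ) - (q : ℂ)⁻¹) • Pi.single (TruncMon.fe a12 a12) 1
  | a2, a2 => (-((q : ℂ) ^ (2 : ℤ))) • Pi.single (TruncMon.fe a2 a2) 1
      + ((q : ℂ) - (q : ℂ)⁻¹) • Pi.single (TruncMon.fe a12 a12) 1
  | β, γ => (-((q : ℂ) ^ ip β γ)) • Pi.single (TruncMon.fe β γ) 1

def genActionOnBasis : LGen → TruncMon → TruncMon → ℂ
  | e γ, .one => Pi.single (TruncMon.ofGen (e γ)) 1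
  | e γ, .ofGen (f β) => efNormal q β γ
  | f β, .one => Pi.single (TruncMon.ofGen (f β)) 1
  | f β, .ofGen (e γ) => Pi.single (TruncMon.fe β γ) 1
  | _, _ => 0

def genAction (x : LGen) : Module.End ℂ (TruncMon → ℂ) :=
  (Pi.basisFun ℂ TruncMon).constr ℂ (genActionOnBasis q x)

@[simp] lemma genAction_single (x : LGen) (b : TruncMon) :
    genAction q x (Pi.single b 1) = genActionOnBasis q x b := by
  simpa only [genAction, Pi.basisFun_apply] using
    (Pi.basisFun ℂ TruncMon).constr_basis ℂ (genActionOnBasis q x) b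

@[simp] lemma genAction_efNormal (x : LGen) (β γ : PosRoot) :
    genAction q x (efNormal q β γ) = 0 := by
  cases x <;> cases β <;> cases γ <;> simp [efNormal, genActionOnBasis]

def freeTruncRep : FreeAlgebra ℂ LGen →ₐ[ℂ] Module.End ℂ (TruncMon → ℂ) :=
  FreeAlgebra.lift ℂ (genAction q)

lemma freeTruncRep_ce (x : LGen) : freeTruncRep q (ce x) = genAction q x :=
  FreeAlgebra.lift_ι_apply _ _

lemma freeTruncRep_rel ⦃x y : FreeAlgebra ℂ LGen⦄ (h : lrel q x y) :
    freeTruncRep q x = freeTruncRep q y := by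
  rcases h with ⟨β, γ, h⟩ | ⟨β, γ, h⟩ | ⟨β, γ, h⟩ | _ | _ <;>
    simp only [map_mul, map_smul, map_sub, map_add, freeTruncRep_ce] <;>
    refine (Pi.basisFun ℂ TruncMon).ext fun b => ?_ <;>
    rcases b with _ | (δ | δ) | ⟨β', γ'⟩ <;>
    simp [genActionOnBasis]
  case ef.one => cases β <;> cases γ <;> simp_all [efNormal]
  all_goals simp [efNormal]

def truncRep : Lam q →ₐ[ℂ] Module.End ℂ (TruncMon → ℂ) :=
  RingQuot.liftAlgHom ℂ ⟨freeTruncRep q, freeTruncRep_rel q⟩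

@[simp] lemma truncRep_gen (x : LGen) : truncRep q (gen q x) = genAction q x := by
  simp [truncRep, gen, freeTruncRep_ce]

lemma truncRep_fe_single_one (γ : PosRoot) :
    truncRep q (fe q γ) (Pi.single .one 1) = Pi.single (TruncMon.fe γ γ) 1 := by
  simp [fe, genActionOnBasis]

end TruncRep

lemma linearIndependent_fe (q : ℝ) : LinearIndependent ℂ (fe q) := by
  let evalOne : Lam q →ₗ[ℂ] TruncMon → ℂ :=
    LinearMap.applyₗ (Pi.single TruncMon.one 1) ∘ₗ (truncRep q).toLinearMap
  refine LinearIndependent.of_comp evalOne ?_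
  have : evalOne ∘ fe q = Pi.basisFun ℂ TruncMon ∘ fun γ => TruncMon.fe γ γ := by
    funext γ
    simp [evalOne, truncRep_fe_single_one]
  rw [this]
  exact (Pi.basisFun ℂ TruncMon).linearIndependent.comp _ fun _ _ h => TruncMon.fe.inj h |>.1

theorem weight_zero_two_forms_general (q : ℝ) :
    wtZeroDeg2 q =
      Submodule.span ℂ {gen q (f a1) * gen q (e a1),
        gen q (f a2) * gen q (e a2), gen q (f a12) * gen q (e a12)}
    ∧ Module.finrank ℂ (wtZeroDeg2 q) = 3 := by
  have hrange : Set.range (fe q) = {gen q (f a1) * gen q (e a1),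
      gen q (f a2) * gen q (e a2), gen q (f a12) * gen q (e a12)} := by
    ext x
    constructor
    · rintro ⟨γ, rfl⟩
      cases γ <;> simp [fe]
    · rintro (rfl | rfl | rfl)
      exacts [⟨a1, rfl⟩, ⟨a2, rfl⟩, ⟨a12, rfl⟩]
  rw [wtZeroDeg2_eq_span_fe, ← hrange, finrank_span_eq_card (linearIndependent_fe q)]
  exact ⟨rfl, rfl⟩

theorem weight_zero_two_forms (q : ℝ) (hq0 : 0 < q) (hq1 : q < 1) :
    wtZeroDeg2 q =
      Submodule.span ℂ {gen q (f a1) * gen q (e a1),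
        gen q (f a2) * gen q (e a2), gen q (f a12) * gen q (e a12)}
    ∧ Module.finrank ℂ (wtZeroDeg2 q) = 3 :=
  weight_zero_two_forms_general q

end QFlagExt
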